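/- arXiv:math/0108010 — 4 statements merged into one kernel-verified Lean document; each statement's English description precedes it below -/
import Mathlib

section
/- Let A = (a_{ik}) be an m×n real matrix with all entries nonnegative, and let x ∈ ℝ^m, y ∈ ℝ^n be vectors with all entries nonnegative. Then xᵀAy ≤ √(Σ_i (Σ_k a_{ik}) x_i²) · √(Σ_k (Σ_i a_{ik}) y_k²). -/
theorem stmt_0 (m n : ℕ) (A : Matrix (Fin m) (Fin n) ℝ)
    (x : Fin m → ℝ) (y : Fin n → ℝ)
    (hA : ∀ i k, 0 ≤ A i k) (hx : ∀ i, 0 ≤ x i) (hy : ∀ k, 0 ≤ y k) :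
    ∑ i, ∑ k, x i * A i k * y k ≤
      Real.sqrt (∑ i, (∑ k, A i k) * x i ^ 2) *
      Real.sqrt (∑ k, (∑ i, A i k) * y k ^ 2) := by
  have key := Finset.sum_sq_le_sum_mul_sum_of_sq_eq_mul (Finset.univ : Finset (Fin m × Fin n))
    (r := fun p => x p.1 * A p.1 p.2 * y p.2)
    (f := fun p => A p.1 p.2 * x p.1 ^ 2)
    (g := fun p => A p.1 p.2 * y p.2 ^ 2)
    (fun p _ => mul_nonneg (hA _ _) (sq_nonneg _))
    (fun p _ => mul_nonneg (hA _ _) (sq_nonneg _))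
    (fun p _ => by ring)
  have h1 : ∑ p : Fin m × Fin n, x p.1 * A p.1 p.2 * y p.2
      = ∑ i, ∑ k, x i * A i k * y k := by
    rw [Fintype.sum_prod_type]
  have h2 : ∑ p : Fin m × Fin n, A p.1 p.2 * x p.1 ^ 2
      = ∑ i, (∑ k, A i k) * x i ^ 2 := by
    rw [Fintype.sum_prod_type]
    simp [Finset.sum_mul]
  have h3 : ∑ p : Fin m × Fin n, A p.1 p.2 * y p.2 ^ 2
      = ∑ k, (∑ i, A i k) * y k ^ 2 := by
    rw [Fintype.sum_prod_type_right]
    simp [Finset.sum_mul]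
  rw [h1, h2, h3] at key
  have hs : 0 ≤ ∑ i, ∑ k, x i * A i k * y k :=
    Finset.sum_nonneg fun i _ => Finset.sum_nonneg fun k _ =>
      mul_nonneg (mul_nonneg (hx i) (hA i k)) (hy k)
  rw [← Real.sqrt_mul_self hs, ← Real.sqrt_mul (Finset.sum_nonneg fun i _ =>
    mul_nonneg (Finset.sum_nonneg fun k _ => hA i k) (sq_nonneg _))]
  exact Real.sqrt_le_sqrt (by nlinarith [key])
end

section
/- Let H = (h_{vv'}) be a symmetric real n×n matrix and l ∈ ℝⁿ a vector with no zero entry such that H l = 0. Then for every x ∈ ℝⁿ, xᵀHx = -(1/2) Σ_{v,v'} h_{vv'} l_v l_{v'} (x_v/l_v - x_{v'}/l_{v'})². -/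
namespace Matrix

variable {ι R : Type*} [Fintype ι] [CommRing R]

theorem sum_sum_mul_eq_zero_of_mulVec_eq_zero {H : Matrix ι ι R} {l : ι → R}
    (hker : H *ᵥ l = 0) (f : ι → R) :
    ∑ v, ∑ v', H v v' * l v * l v' * f v = 0 := by
  have hrow (v : ι) : ∑ v', H v v' * l v' = 0 := congrFun hker v
  refine Finset.sum_eq_zero fun v _ => ?_
  calc ∑ v', H v v' * l v * l v' * f v = (∑ v', H v v' * l v') * (l v * f v) := by
        rw [Finset.sum_mul]; exact Finset.sum_congr rfl fun _ _ => by ring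
    _ = 0 := by rw [hrow, zero_mul]

theorem sum_sum_mul_sub_sq_eq_of_mulVec_eq_zero {H : Matrix ι ι R} (hsymm : H.IsSymm)
    {l : ι → R} (hker : H *ᵥ l = 0) (y : ι → R) :
    ∑ v, ∑ v', H v v' * l v * l v' * (y v - y v') ^ 2 =
      -2 * ∑ v, ∑ v', l v * y v * H v v' * (l v' * y v') := by
  have hdiag : ∑ v, ∑ v', H v v' * l v * l v' * y v ^ 2 = 0 :=
    sum_sum_mul_eq_zero_of_mulVec_eq_zero hker _
  have hdiag' : ∑ v, ∑ v', H v v' * l v * l v' * y v' ^ 2 = 0 := by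
    rw [Finset.sum_comm, ← hdiag]
    refine Finset.sum_congr rfl fun v _ => Finset.sum_congr rfl fun v' _ => ?_
    rw [hsymm.apply v v']
    ring
  calc ∑ v, ∑ v', H v v' * l v * l v' * (y v - y v') ^ 2
      = ∑ v, ∑ v', (H v v' * l v * l v' * y v ^ 2 + H v v' * l v * l v' * y v' ^ 2
          - 2 * (l v * y v * H v v' * (l v' * y v'))) :=
        Finset.sum_congr rfl fun _ _ => Finset.sum_congr rfl fun _ _ => by ring
    _ = -2 * ∑ v, ∑ v', l v * y v * H v v' * (l v' * y v') := by
        simp only [Finset.sum_sub_distrib, Finset.sum_add_distrib, hdiag, hdiag', ← Finset.mul_sum]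
        ring

end Matrix

theorem stmt_2 (n : ℕ) (H : Matrix (Fin n) (Fin n) ℝ)
    (hsymm : H.IsSymm) (l : Fin n → ℝ) (hl : ∀ v, l v ≠ 0)
    (hker : H.mulVec l = 0) (x : Fin n → ℝ) :
    ∑ v, ∑ v', x v * H v v' * x v' =
      -(1/2) * ∑ v, ∑ v', H v v' * l v * l v' * (x v / l v - x v' / l v') ^ 2 := by
  have hx : ∀ v, l v * (x v / l v) = x v := fun v => mul_div_cancel₀ _ (hl v)
  rw [Matrix.sum_sum_mul_sub_sq_eq_of_mulVec_eq_zero hsymm hker (fun v => x v / l v)]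
  simp only [hx]
  ring
end

section
/- A symmetric real n×n matrix with nonpositive off-diagonal entries that is positive semidefinite is supersingular (annihilates some vector with no zero entry) if and only if it annihilates a vector all of whose entries are strictly positive. -/
/-!
Passing from `l` to `|l|` can only lower the quadratic form `xᵀ H x`: the diagonal terms are
unchanged and each off-diagonal term `l v H v v' l v'` can only decrease because `H v v' ≤ 0`.
Hence if `H l = 0` then `0 ≤ |l|ᵀ H |l| ≤ lᵀ H l = 0`, and for a positive semidefinite matrix a
vanishing quadratic form forces `H |l| = 0`.
-/

namespace Matrix

variable {ι : Type*} [Fintype ι] {H : Matrix ι ι ℝ}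

theorem dotProduct_mulVec_eq_sum_sum (H : Matrix ι ι ℝ) (x : ι → ℝ) :
    x ⬝ᵥ H *ᵥ x = ∑ i, ∑ j, x i * H i j * x j := by
  simp only [dotProduct, mulVec, Finset.mul_sum, mul_assoc]

theorem abs_dotProduct_mulVec_abs_le (hoff : ∀ i j, i ≠ j → H i j ≤ 0) (x : ι → ℝ) :
    |x| ⬝ᵥ H *ᵥ |x| ≤ x ⬝ᵥ H *ᵥ x := by
  rw [dotProduct_mulVec_eq_sum_sum, dotProduct_mulVec_eq_sum_sum]
  refine Finset.sum_le_sum fun i _ => Finset.sum_le_sum fun j _ => ?_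
  simp only [Pi.abs_apply]
  rcases eq_or_ne i j with rfl | hij
  · rw [mul_right_comm, abs_mul_abs_self, mul_right_comm]
  · have hprod : x i * x j ≤ |x i| * |x j| := abs_mul (x i) (x j) ▸ le_abs_self _
    nlinarith [hoff i j hij]

theorem PosSemidef.mulVec_abs_eq_zero (hH : H.PosSemidef) (hoff : ∀ i j, i ≠ j → H i j ≤ 0)
    {x : ι → ℝ} (hx : H *ᵥ x = 0) : H *ᵥ |x| = 0 := by
  rw [← hH.dotProduct_mulVec_zero_iff, star_trivial]
  refine le_antisymm ?_ (by simpa using hH.dotProduct_mulVec_nonneg |x|)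
  calc |x| ⬝ᵥ H *ᵥ |x| ≤ x ⬝ᵥ H *ᵥ x := abs_dotProduct_mulVec_abs_le hoff x
    _ = 0 := by rw [hx, dotProduct_zero]

end Matrix

theorem stmt_5 (n : ℕ) (H : Matrix (Fin n) (Fin n) ℝ) (hsymm : H.IsSymm)
    (hoff : ∀ v v', v ≠ v' → H v v' ≤ 0)
    (hpsd : ∀ x : Fin n → ℝ, 0 ≤ ∑ v, ∑ v', x v * H v v' * x v') :
    (∃ l : Fin n → ℝ, H.mulVec l = 0 ∧ ∀ v, l v ≠ 0) ↔
    (∃ l : Fin n → ℝ, H.mulVec l = 0 ∧ ∀ v, 0 < l v) := by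
  have hH : H.PosSemidef := .of_dotProduct_mulVec_nonneg (Matrix.isHermitian_iff_isSymm.mpr hsymm)
    fun x => by simpa [Matrix.dotProduct_mulVec_eq_sum_sum] using hpsd x
  constructor
  · rintro ⟨l, hl, hne⟩
    exact ⟨|l|, hH.mulVec_abs_eq_zero hoff hl, fun v => abs_pos.mpr (hne v)⟩
  · rintro ⟨l, hl, hpos⟩
    exact ⟨l, hl, fun v => (hpos v).ne'⟩
end

section
/- Let A be a nonnegative n×m real matrix, let x ∈ ℝⁿ and y ∈ ℝ^m be nonnegative vectors, let D be the n×n diagonal matrix with D_{ii} = Σ_k A_{ik}, and let D' be the m×m diagonal matrix with D'_{kk} = Σ_i A_{ik}. Then xᵀAy ≤ √(xᵀDx)·√(yᵀD'y). -/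
open Matrix
theorem stmt_11 (n m : ℕ) (A : Matrix (Fin n) (Fin m) ℝ)
    (hA : ∀ i k, 0 ≤ A i k)
    (x : Fin n → ℝ) (y : Fin m → ℝ) (hx : ∀ i, 0 ≤ x i) (hy : ∀ k, 0 ≤ y k)
    (D : Matrix (Fin n) (Fin n) ℝ) (hD : D = Matrix.diagonal (fun i => ∑ k, A i k))
    (D' : Matrix (Fin m) (Fin m) ℝ) (hD' : D' = Matrix.diagonal (fun k => ∑ i, A i k)) :
    x ⬝ᵥ A.mulVec y ≤ Real.sqrt (x ⬝ᵥ D.mulVec x) * Real.sqrt (y ⬝ᵥ D'.mulVec y) := by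
  subst hD hD'
  have key := Real.sum_mul_le_sqrt_mul_sqrt (Finset.univ : Finset (Fin n × Fin m))
    (fun p => Real.sqrt (A p.1 p.2) * x p.1) (fun p => Real.sqrt (A p.1 p.2) * y p.2)
  have hsq : ∀ (i : Fin n) (k : Fin m), Real.sqrt (A i k) * Real.sqrt (A i k) = A i k :=
    fun i k => Real.mul_self_sqrt (hA i k)
  have h1 : x ⬝ᵥ A.mulVec y =
      ∑ p : Fin n × Fin m, (Real.sqrt (A p.1 p.2) * x p.1) * (Real.sqrt (A p.1 p.2) * y p.2) := by
    rw [Fintype.sum_prod_type]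
    simp only [dotProduct, mulVec, dotProduct, Finset.mul_sum]
    refine Finset.sum_congr rfl fun i _ => Finset.sum_congr rfl fun k _ => ?_
    rw [mul_mul_mul_comm, hsq]
    ring
  have h2 : x ⬝ᵥ (Matrix.diagonal (fun i => ∑ k, A i k)).mulVec x =
      ∑ p : Fin n × Fin m, (Real.sqrt (A p.1 p.2) * x p.1) ^ 2 := by
    rw [Fintype.sum_prod_type]
    simp only [dotProduct, mulVec_diagonal]
    refine Finset.sum_congr rfl fun i _ => ?_
    rw [Finset.sum_mul, Finset.mul_sum]
    refine Finset.sum_congr rfl fun k _ => ?_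
    rw [mul_pow, sq, sq, hsq]
    ring
  have h3 : y ⬝ᵥ (Matrix.diagonal (fun k => ∑ i, A i k)).mulVec y =
      ∑ p : Fin n × Fin m, (Real.sqrt (A p.1 p.2) * y p.2) ^ 2 := by
    rw [Fintype.sum_prod_type_right]
    simp only [dotProduct, mulVec_diagonal]
    refine Finset.sum_congr rfl fun k _ => ?_
    rw [Finset.sum_mul, Finset.mul_sum]
    refine Finset.sum_congr rfl fun i _ => ?_
    rw [mul_pow, sq, sq, hsq]
    ring
  rw [h1, h2, h3]
  exact key
end
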